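/- arXiv:1902.06844 — 2 statements merged into one kernel-verified Lean document; each statement's English description precedes it below -/
import Mathlib

section
/- (Block-diagonality under path separation) For the multipath signal model with differentiable s and a_m, suppose assumption (As2) holds: for every pair l ≠ l', at least one of (delay separation) s_l^T s_{l'} = ṡ_l^T ṡ_{l'} = ṡ_l^T s_{l'} = s_l^T ṡ_{l'} = 0, or (angle separation) a_l^H a_{l'} = ȧ_{l,φ}^H ȧ_{l',φ} = ȧ_{l,θ}^H ȧ_{l',θ} = ȧ_{l,φ}^H ȧ_{l',θ} = ȧ_{l,θ}^H ȧ_{l',φ} = ȧ_{l,φ}^H a_{l'} = ȧ_{l,θ}^H a_{l'} = a_l^H ȧ_{l',φ} = a_l^H ȧ_{l',θ} = 0. Then every entry of the Fisher information matrix I_ψ coupling a parameter of path l with a parameter of path l' (l ≠ l') is zero; i.e., after grouping the parameters by path, I_ψ is block diagonal with L blocks of size 5×5. -/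
open MeasureTheory ProbabilityTheory Complex Matrix
open scoped Real

noncomputable section

/-- Parameter space `ψ ∈ ℝ^{5L}`: delays `τ`, azimuths `φ`, elevations `θ`,
real gains `α^R`, imaginary gains `α^I`. -/
abbrev PSp (L : ℕ) := (Fin L → ℝ) × (Fin L → ℝ) × (Fin L → ℝ) × (Fin L → ℝ) × (Fin L → ℝ)

/-- Index set for the `5L` real parameters (delays, azimuths, elevations, real
gains, imaginary gains of the `L` paths). -/
abbrev Idx (L : ℕ) := Fin L ⊕ Fin L ⊕ Fin L ⊕ Fin L ⊕ Fin L

/-- Canonical basis direction of parameter `u`. -/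
def basisP {L : ℕ} : Idx L → PSp L
  | Sum.inl l => (Pi.single l 1, 0, 0, 0, 0)
  | Sum.inr (Sum.inl l) => (0, Pi.single l 1, 0, 0, 0)
  | Sum.inr (Sum.inr (Sum.inl l)) => (0, 0, Pi.single l 1, 0, 0)
  | Sum.inr (Sum.inr (Sum.inr (Sum.inl l))) => (0, 0, 0, Pi.single l 1, 0)
  | Sum.inr (Sum.inr (Sum.inr (Sum.inr l))) => (0, 0, 0, 0, Pi.single l 1)

/-- Complex gain `α_l = α_l^R + j α_l^I` of path `l`. -/
def gain {L : ℕ} (ψ : PSp L) (l : Fin L) : ℂ := ψ.2.2.2.1 l + ψ.2.2.2.2 l * Complex.I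

/-- Noiseless received signal `μ_{m,n}(ψ) = Σ_l α_l a_m(φ_l,θ_l) s(nT_s − τ_l)`. -/
def μmodel {L M N : ℕ} (a : Fin M → ℝ × ℝ → ℂ) (s : ℝ → ℝ) (Ts : ℝ)
    (m : Fin M) (n : Fin N) (ψ : PSp L) : ℂ :=
  ∑ l, gain ψ l * a m (ψ.2.1 l, ψ.2.2.1 l) * (s ((n : ℕ) * Ts - ψ.1 l) : ℂ)

/-- Fisher information matrix
`[I_ψ]_{u,v} = (2/σ_w²) Σ_n Σ_m Re{(∂μ_{m,n}/∂ψ_u)^* (∂μ_{m,n}/∂ψ_v)}`. -/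
def Fisher {L M N : ℕ} (a : Fin M → ℝ × ℝ → ℂ) (s : ℝ → ℝ) (Ts σw : ℝ)
    (ψ : PSp L) : Matrix (Idx L) (Idx L) ℝ :=
  Matrix.of fun u v => (2 / σw ^ 2) * ∑ n : Fin N, ∑ m : Fin M,
    ((starRingEnd ℂ) (fderiv ℝ (μmodel a s Ts m n) ψ (basisP u)) *
      fderiv ℝ (μmodel a s Ts m n) ψ (basisP v)).re

/-- Sampled pulse vector `s_l = (s(nT_s − τ_l))_n`. -/
def sV {L : ℕ} (N : ℕ) (s : ℝ → ℝ) (Ts : ℝ) (ψ : PSp L) (l : Fin L) : Fin N → ℝ :=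
  fun n => s ((n : ℕ) * Ts - ψ.1 l)

/-- Sampled pulse-derivative vector `ṡ_l = (ṡ(nT_s − τ_l))_n`. -/
def sdV {L : ℕ} (N : ℕ) (s : ℝ → ℝ) (Ts : ℝ) (ψ : PSp L) (l : Fin L) : Fin N → ℝ :=
  fun n => deriv s ((n : ℕ) * Ts - ψ.1 l)

/-- Array response vector `a_l = (a_m(φ_l,θ_l))_m`. -/
def aV {L M : ℕ} (a : Fin M → ℝ × ℝ → ℂ) (ψ : PSp L) (l : Fin L) : Fin M → ℂ :=
  fun m => a m (ψ.2.1 l, ψ.2.2.1 l)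

/-- Azimuth-derivative array vector `ȧ_{l,φ} = (∂a_m/∂φ(φ_l,θ_l))_m`. -/
def aVφ {L M : ℕ} (a : Fin M → ℝ × ℝ → ℂ) (ψ : PSp L) (l : Fin L) : Fin M → ℂ :=
  fun m => fderiv ℝ (a m) (ψ.2.1 l, ψ.2.2.1 l) (1, 0)

/-- Elevation-derivative array vector `ȧ_{l,θ} = (∂a_m/∂θ(φ_l,θ_l))_m`. -/
def aVθ {L M : ℕ} (a : Fin M → ℝ × ℝ → ℂ) (ψ : PSp L) (l : Fin L) : Fin M → ℂ :=
  fun m => fderiv ℝ (a m) (ψ.2.1 l, ψ.2.2.1 l) (0, 1)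

/-- Hermitian inner product `x^H y = Σ conj(x_i) y_i` of complex vectors. -/
def hip {k : ℕ} (x y : Fin k → ℂ) : ℂ := ∑ i, (starRingEnd ℂ) (x i) * y i

/-- Real inner product `x^T y` of real vectors. -/
def rip {k : ℕ} (x y : Fin k → ℝ) : ℝ := ∑ i, x i * y i

/-- The path to which a parameter index belongs. -/
def pathOf {L : ℕ} : Idx L → Fin L
  | Sum.inl l => l
  | Sum.inr (Sum.inl l) => l
  | Sum.inr (Sum.inr (Sum.inl l)) => l
  | Sum.inr (Sum.inr (Sum.inr (Sum.inl l))) => l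
  | Sum.inr (Sum.inr (Sum.inr (Sum.inr l))) => l

/-
Each partial derivative `∂μ_{m,n}/∂ψ_u` only involves the path `l` of `u` and is separable:
it equals `c_u · g_u[m] · f_u[n]` with a scalar `c_u ∈ {−α_l, α_l, 1, j}`, an array vector
`g_u ∈ {a_l, ȧ_{l,φ}, ȧ_{l,θ}}` and a pulse vector `f_u ∈ {s_l, ṡ_l}`. The double sum over
antennas and samples in a Fisher entry therefore factors as `conj(c_u) c_v (g_u^H g_v)(f_u^T f_v)`.
For `l ≠ l'`, delay separation makes the last factor vanish and angle separation the middle one.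
-/

namespace MultipathFisher

theorem apply_prodMk_eq_smul_add_smul {𝕜 E F : Type*} [Semiring 𝕜] [AddCommMonoid E]
    [Module 𝕜 E] [FunLike F (𝕜 × 𝕜) E] [LinearMapClass F 𝕜 (𝕜 × 𝕜) E] (f : F) (x y : 𝕜) :
    f (x, y) = x • f (1, 0) + y • f (0, 1) := by
  rw [← map_smul, ← map_smul, ← map_add]
  simp

variable {L M N : ℕ} (a : Fin M → ℝ × ℝ → ℂ) (s : ℝ → ℝ) (Ts : ℝ)

theorem fderiv_μmodel_apply {ψ : PSp L} {m : Fin M} {n : Fin N}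
    (hs : ∀ l, DifferentiableAt ℝ s ((n : ℕ) * Ts - ψ.1 l))
    (ha : ∀ l, DifferentiableAt ℝ (a m) (ψ.2.1 l, ψ.2.2.1 l)) (x : PSp L) :
    fderiv ℝ (μmodel a s Ts m n) ψ x = ∑ l,
      (gain x l * aV a ψ l m * sV N s Ts ψ l n
        + gain ψ l * (x.2.1 l * aVφ a ψ l m + x.2.2.1 l * aVθ a ψ l m) * sV N s Ts ψ l n
        - gain ψ l * aV a ψ l m * (x.1 l * sdV N s Ts ψ l n : ℝ)) := by
  have hid := hasFDerivAt_id (𝕜 := ℝ) ψ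
  have hτ l := (hasFDerivAt_apply l _).comp ψ hid.fst
  have hφ l := (hasFDerivAt_apply l _).comp ψ hid.snd.fst
  have hθ l := (hasFDerivAt_apply l _).comp ψ hid.snd.snd.fst
  have hR l := (hasFDerivAt_apply l _).comp ψ hid.snd.snd.snd.fst
  have hI l := (hasFDerivAt_apply l _).comp ψ hid.snd.snd.snd.snd
  have hgain l := (ofRealCLM.hasFDerivAt.comp ψ (hR l)).add
    ((ofRealCLM.hasFDerivAt.comp ψ (hI l)).mul_const Complex.I)
  have harr l := (ha l).hasFDerivAt.comp ψ ((hφ l).prodMk (hθ l))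
  have hpulse l := ofRealCLM.hasFDerivAt.comp ψ
    ((hs l).hasDerivAt.comp_hasFDerivAt ψ ((hasFDerivAt_const _ ψ).sub (hτ l)))
  have hμ : HasFDerivAt (μmodel a s Ts m n) _ ψ :=
    .fun_sum fun l _ => ((hgain l).mul (harr l)).mul (hpulse l)
  rw [hμ.fderiv, _root_.sum_apply]
  refine Finset.sum_congr rfl fun l _ => ?_
  have hpair (f : ℝ × ℝ →L[ℝ] ℂ) :=
    apply_prodMk_eq_smul_add_smul f (x.2.1 l) (x.2.2.1 l)
  simp only [id_eq, Function.comp_apply, ofRealCLM_apply, Pi.mul_apply, Pi.add_apply,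
    ContinuousLinearMap.comp_id, zero_sub, smul_neg, ContinuousLinearMap.comp_neg,
    ContinuousLinearMap.comp_smulₛₗ, Real.ringHom_apply, smul_add, coe_smul, _root_.add_apply,
    _root_.neg_apply, _root_.smul_apply, ContinuousLinearMap.comp_apply,
    ContinuousLinearMap.coe_fst', ContinuousLinearMap.coe_snd', ContinuousLinearMap.proj_apply,
    ContinuousLinearMap.prod_apply, real_smul, smul_eq_mul, hpair, gain, aV, sV, aVφ, aVθ, sdV,
    ofReal_mul]
  ring

def derivGain (ψ : PSp L) : Idx L → ℂ
  | Sum.inl l => -gain ψ l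
  | Sum.inr (Sum.inl l) => gain ψ l
  | Sum.inr (Sum.inr (Sum.inl l)) => gain ψ l
  | Sum.inr (Sum.inr (Sum.inr (Sum.inl _))) => 1
  | Sum.inr (Sum.inr (Sum.inr (Sum.inr _))) => Complex.I

def derivArray (ψ : PSp L) : Idx L → Fin M → ℂ
  | Sum.inl l => aV a ψ l
  | Sum.inr (Sum.inl l) => aVφ a ψ l
  | Sum.inr (Sum.inr (Sum.inl l)) => aVθ a ψ l
  | Sum.inr (Sum.inr (Sum.inr (Sum.inl l))) => aV a ψ l
  | Sum.inr (Sum.inr (Sum.inr (Sum.inr l))) => aV a ψ l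

def derivPulse (N : ℕ) (ψ : PSp L) : Idx L → Fin N → ℝ
  | Sum.inl l => sdV N s Ts ψ l
  | Sum.inr (Sum.inl l) => sV N s Ts ψ l
  | Sum.inr (Sum.inr (Sum.inl l)) => sV N s Ts ψ l
  | Sum.inr (Sum.inr (Sum.inr (Sum.inl l))) => sV N s Ts ψ l
  | Sum.inr (Sum.inr (Sum.inr (Sum.inr l))) => sV N s Ts ψ l

theorem fderiv_μmodel_basisP {ψ : PSp L} {m : Fin M} {n : Fin N}
    (hs : ∀ l, DifferentiableAt ℝ s ((n : ℕ) * Ts - ψ.1 l))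
    (ha : ∀ l, DifferentiableAt ℝ (a m) (ψ.2.1 l, ψ.2.2.1 l)) (u : Idx L) :
    fderiv ℝ (μmodel a s Ts m n) ψ (basisP u) =
      derivGain ψ u * derivArray a ψ u m * derivPulse s Ts N ψ u n := by
  rw [fderiv_μmodel_apply a s Ts hs ha]
  rcases u with l | l | l | l | l <;>
    simp only [derivGain, derivArray, derivPulse, gain, basisP, Pi.zero_apply, Pi.single_apply,
      apply_ite ((↑) : ℝ → ℂ), ofReal_zero, ofReal_one, ite_mul, mul_ite, zero_mul, mul_zero,
      one_mul, zero_add, add_zero, zero_sub, sub_zero, Finset.sum_neg_distrib, Finset.sum_ite_eq',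
      Finset.mem_univ, ↓reduceIte]
  ring

theorem sum_sum_conj_mul_mul (c c' : ℂ) (g g' : Fin M → ℂ) (f f' : Fin N → ℝ) :
    ∑ n : Fin N, ∑ m : Fin M, starRingEnd ℂ (c * g m * (f n : ℂ)) * (c' * g' m * (f' n : ℂ)) =
      starRingEnd ℂ c * c' * hip g g' * rip f f' := by
  simp only [hip, rip, Complex.ofReal_sum, Complex.ofReal_mul, Finset.mul_sum, Finset.sum_mul]
  refine Finset.sum_congr rfl fun n _ => Finset.sum_congr rfl fun m _ => ?_
  simp only [map_mul, Complex.conj_ofReal]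
  ring

theorem fisher_apply {σw : ℝ} {ψ : PSp L} (hs : Differentiable ℝ s)
    (ha : ∀ m, Differentiable ℝ (a m)) (u v : Idx L) :
    Fisher (N := N) a s Ts σw ψ u v =
      2 / σw ^ 2 * (starRingEnd ℂ (derivGain ψ u) * derivGain ψ v *
        hip (derivArray a ψ u) (derivArray a ψ v) *
        rip (derivPulse s Ts N ψ u) (derivPulse s Ts N ψ v)).re := by
  simp only [Fisher, Matrix.of_apply, ← Complex.re_sum, sum_sum_conj_mul_mul,
    fderiv_μmodel_basisP a s Ts (fun _ => hs _) (fun _ => ha _ _)]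

def DelaySeparated (N : ℕ) (ψ : PSp L) (l l' : Fin L) : Prop :=
  rip (sV N s Ts ψ l) (sV N s Ts ψ l') = 0 ∧ rip (sdV N s Ts ψ l) (sdV N s Ts ψ l') = 0 ∧
    rip (sdV N s Ts ψ l) (sV N s Ts ψ l') = 0 ∧ rip (sV N s Ts ψ l) (sdV N s Ts ψ l') = 0

def AngleSeparated (ψ : PSp L) (l l' : Fin L) : Prop :=
  hip (aV a ψ l) (aV a ψ l') = 0 ∧ hip (aVφ a ψ l) (aVφ a ψ l') = 0 ∧
    hip (aVθ a ψ l) (aVθ a ψ l') = 0 ∧ hip (aVφ a ψ l) (aVθ a ψ l') = 0 ∧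
    hip (aVθ a ψ l) (aVφ a ψ l') = 0 ∧ hip (aVφ a ψ l) (aV a ψ l') = 0 ∧
    hip (aVθ a ψ l) (aV a ψ l') = 0 ∧ hip (aV a ψ l) (aVφ a ψ l') = 0 ∧
    hip (aV a ψ l) (aVθ a ψ l') = 0

theorem DelaySeparated.rip_derivPulse_eq_zero {ψ : PSp L} {u v : Idx L}
    (h : DelaySeparated s Ts N ψ (pathOf u) (pathOf v)) :
    rip (derivPulse s Ts N ψ u) (derivPulse s Ts N ψ v) = 0 := by
  obtain ⟨h₁, h₂, h₃, h₄⟩ := h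
  rcases u with _ | _ | _ | _ | _ <;> rcases v with _ | _ | _ | _ | _ <;> assumption

theorem AngleSeparated.hip_derivArray_eq_zero {ψ : PSp L} {u v : Idx L}
    (h : AngleSeparated a ψ (pathOf u) (pathOf v)) :
    hip (derivArray a ψ u) (derivArray a ψ v) = 0 := by
  obtain ⟨h₁, h₂, h₃, h₄, h₅, h₆, h₇, h₈, h₉⟩ := h
  rcases u with _ | _ | _ | _ | _ <;> rcases v with _ | _ | _ | _ | _ <;> assumption

end MultipathFisher

/-- under path separation (As2), every Fisher-information entry
coupling a parameter of path `l` with a parameter of a different path `l'`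
vanishes, i.e. `I_ψ` is block diagonal with `L` blocks of size 5×5. -/
theorem stmt_10 {L M N : ℕ} (a : Fin M → ℝ × ℝ → ℂ) (s : ℝ → ℝ) (Ts σw : ℝ)
    (hs : Differentiable ℝ s) (ha : ∀ m, Differentiable ℝ (a m)) (ψ : PSp L)
    (hAs2 : ∀ l l' : Fin L, l ≠ l' →
      -- separation in delay
      (rip (sV N s Ts ψ l) (sV N s Ts ψ l') = 0 ∧
       rip (sdV N s Ts ψ l) (sdV N s Ts ψ l') = 0 ∧
       rip (sdV N s Ts ψ l) (sV N s Ts ψ l') = 0 ∧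
       rip (sV N s Ts ψ l) (sdV N s Ts ψ l') = 0) ∨
      -- separation in azimuth and/or elevation angle
      (hip (aV a ψ l) (aV a ψ l') = 0 ∧
       hip (aVφ a ψ l) (aVφ a ψ l') = 0 ∧
       hip (aVθ a ψ l) (aVθ a ψ l') = 0 ∧
       hip (aVφ a ψ l) (aVθ a ψ l') = 0 ∧
       hip (aVθ a ψ l) (aVφ a ψ l') = 0 ∧
       hip (aVφ a ψ l) (aV a ψ l') = 0 ∧
       hip (aVθ a ψ l) (aV a ψ l') = 0 ∧
       hip (aV a ψ l) (aVφ a ψ l') = 0 ∧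
       hip (aV a ψ l) (aVθ a ψ l') = 0)) :
    ∀ u v : Idx L, pathOf u ≠ pathOf v → Fisher (N := N) a s Ts σw ψ u v = 0 := by
  intro u v huv
  rw [MultipathFisher.fisher_apply a s Ts hs ha]
  rcases hAs2 _ _ huv with hdelay | hangle
  · simp [MultipathFisher.DelaySeparated.rip_derivPulse_eq_zero s Ts hdelay]
  · simp [MultipathFisher.AngleSeparated.hip_derivArray_eq_zero a hangle]
end
end

section
/- (Corollary 1: simplified lower bound for separated rays) For the multipath signal model, assume: (As2) path separation (for every pair l ≠ l', either s_l^T s_{l'} = ṡ_l^T ṡ_{l'} = ṡ_l^T s_{l'} = s_l^T ṡ_{l'} = 0, or a_l^H a_{l'} = ȧ_{l,φ}^H ȧ_{l',φ} = ȧ_{l,θ}^H ȧ_{l',θ} = ȧ_{l,φ}^H ȧ_{l',θ} = ȧ_{l,θ}^H ȧ_{l',φ} = ȧ_{l,φ}^H a_{l'} = ȧ_{l,θ}^H a_{l'} = a_l^H ȧ_{l',φ} = a_l^H ȧ_{l',θ} = 0); (As3) ȧ_{l,φ}^H a_l = ȧ_{l,θ}^H a_l = 0 for every l; within-path orthogonality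 ṡ_l^T s_l = 0 and ȧ_{l,φ}^H ȧ_{l,θ} = 0 for every l; for every l: α_l ≠ 0, ‖a_l‖ > 0, ‖ȧ_{l,φ}‖ > 0, ‖ȧ_{l,θ}‖ > 0, and the energy conditions ‖s_l‖² = ‖s‖² > 0 and ‖ṡ_l‖² = ‖ṡ‖² > 0. Then I_ψ is invertible and the lower bound of Theorem 1 averaged over the receive antennas equals LB(f,ψ) := (1/M) Σ_{m=1}^M g_{m,f,ψ}^H I_ψ^{−1} g_{m,f,ψ} = (1/SNR) · (L/M) · ( 2 + (1/2)(f/σ_F)² ), where SNR = ‖s‖²/σ_w² and σ_F² = ‖ṡ‖²/((2π)²‖s‖²). In particular LB(f,ψ) does not depend on the path parameters ψ. -/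
open MeasureTheory ProbabilityTheory Complex Matrix
open scoped Real

noncomputable section

/-- Gradient vector `g_{m,f,ψ}` of the channel frequency response
`H_m(f,ψ) = Σ_l α_l a_m(φ_l,θ_l) e^{−j2πfτ_l}` with respect to the 5L parameters. -/
def gVec {L M : ℕ} (a : Fin M → ℝ × ℝ → ℂ) (f : ℝ) (ψ : PSp L) (m : Fin M) : Idx L → ℂ
  | Sum.inl l => -(Complex.I * (2 * π * f)) * gain ψ l * a m (ψ.2.1 l, ψ.2.2.1 l) *
      Complex.exp (-(Complex.I * (2 * π * f * ψ.1 l)))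
  | Sum.inr (Sum.inl l) => gain ψ l * fderiv ℝ (a m) (ψ.2.1 l, ψ.2.2.1 l) (1, 0) *
      Complex.exp (-(Complex.I * (2 * π * f * ψ.1 l)))
  | Sum.inr (Sum.inr (Sum.inl l)) => gain ψ l * fderiv ℝ (a m) (ψ.2.1 l, ψ.2.2.1 l) (0, 1) *
      Complex.exp (-(Complex.I * (2 * π * f * ψ.1 l)))
  | Sum.inr (Sum.inr (Sum.inr (Sum.inl l))) => a m (ψ.2.1 l, ψ.2.2.1 l) *
      Complex.exp (-(Complex.I * (2 * π * f * ψ.1 l)))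
  | Sum.inr (Sum.inr (Sum.inr (Sum.inr l))) => Complex.I * a m (ψ.2.1 l, ψ.2.2.1 l) *
      Complex.exp (-(Complex.I * (2 * π * f * ψ.1 l)))

/-!
Each partial derivative of the model factorises as `∂μ_{m,n}/∂ψ_u = c_u · b_{u,m} · p_{u,n}`:
a scalar `partialCoeff` (`-α_l`, `α_l`, `1` or `j`), an array vector `partialArray` (`a_l`,
`ȧ_{l,φ}` or `ȧ_{l,θ}`) and a pulse vector `partialPulse` (`ṡ_l` or `s_l`). Hence `[I_ψ]_{u,v} = (2/σ_w²) Re(c_u^* c_v b_u^H b_v) p_u^T p_v`.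
Path separation kills the entries between different paths; (As3) and within-path orthogonality
kill those within one path, the pair (real gain, imaginary gain) because `c_u^* c_v b_u^H b_v`
is then `j‖a_l‖²`, purely imaginary. So `I_ψ` is diagonal with positive entries and the bound is
`Σ_u |g_{m,u}|² / [I_ψ]_{u,u}`, where the gain and array norms cancel term by term.
-/

section FisherDiagonal

variable {L M N : ℕ} {a : Fin M → ℝ × ℝ → ℂ} {s : ℝ → ℝ} {Ts σw : ℝ} {ψ : PSp L}

lemma fderiv_μmodel_apply (hs : Differentiable ℝ s) (ha : ∀ m, Differentiable ℝ (a m))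
    (m : Fin M) (n : Fin N) (e : PSp L) :
    fderiv ℝ (μmodel a s Ts m n) ψ e = ∑ l,
      (gain e l * a m (ψ.2.1 l, ψ.2.2.1 l) * s ((n : ℕ) * Ts - ψ.1 l)
        + gain ψ l * fderiv ℝ (a m) (ψ.2.1 l, ψ.2.2.1 l) (e.2.1 l, e.2.2.1 l) *
            s ((n : ℕ) * Ts - ψ.1 l)
        - gain ψ l * a m (ψ.2.1 l, ψ.2.2.1 l) * deriv s ((n : ℕ) * Ts - ψ.1 l) * e.1 l) := by
  have hid := hasFDerivAt_id (𝕜 := ℝ) ψ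
  have hterm : ∀ l : Fin L, HasFDerivAt
      (fun ψ : PSp L => gain ψ l * a m (ψ.2.1 l, ψ.2.2.1 l) * s ((n : ℕ) * Ts - ψ.1 l)) _ ψ :=
    fun l =>
    have hτ := hasFDerivAt_pi'.1 hid.fst l
    have hφ := hasFDerivAt_pi'.1 hid.snd.fst l
    have hθ := hasFDerivAt_pi'.1 hid.snd.snd.fst l
    have hR := hasFDerivAt_pi'.1 hid.snd.snd.snd.fst l
    have hI := hasFDerivAt_pi'.1 hid.snd.snd.snd.snd l
    have hgain := (ofRealCLM.hasFDerivAt.comp ψ hR).add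
      ((ofRealCLM.hasFDerivAt.comp ψ hI).mul_const Complex.I)
    have harray := (ha m _).hasFDerivAt.comp ψ (hφ.prodMk hθ)
    have hpulse := ofRealCLM.hasFDerivAt.comp ψ
      ((hs _).hasDerivAt.comp_hasFDerivAt ψ (hτ.const_sub ((n : ℕ) * Ts)))
    (hgain.fun_mul harray).fun_mul hpulse
  have hμ : HasFDerivAt (μmodel (N := N) a s Ts m n) _ ψ :=
    (HasFDerivAt.fun_sum fun l _ => hterm l :)
  rw [hμ.fderiv, FunLike.coe_sum, Finset.sum_apply]
  refine Finset.sum_congr rfl fun l _ => ?_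
  simp [gain]
  ring

def Idx.path {L : ℕ} : Idx L → Fin L
  | Sum.inl l | Sum.inr (Sum.inl l) | Sum.inr (Sum.inr (Sum.inl l))
  | Sum.inr (Sum.inr (Sum.inr (Sum.inl l))) | Sum.inr (Sum.inr (Sum.inr (Sum.inr l))) => l

def partialCoeff {L : ℕ} (ψ : PSp L) : Idx L → ℂ
  | Sum.inl l => -gain ψ l
  | Sum.inr (Sum.inl l) => gain ψ l
  | Sum.inr (Sum.inr (Sum.inl l)) => gain ψ l
  | Sum.inr (Sum.inr (Sum.inr (Sum.inl _))) => 1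
  | Sum.inr (Sum.inr (Sum.inr (Sum.inr _))) => Complex.I

def partialArray {L M : ℕ} (a : Fin M → ℝ × ℝ → ℂ) (ψ : PSp L) : Idx L → Fin M → ℂ
  | Sum.inr (Sum.inl l) => aVφ a ψ l
  | Sum.inr (Sum.inr (Sum.inl l)) => aVθ a ψ l
  | u => aV a ψ u.path

def partialPulse {L : ℕ} (N : ℕ) (s : ℝ → ℝ) (Ts : ℝ) (ψ : PSp L) : Idx L → Fin N → ℝ
  | Sum.inl l => sdV N s Ts ψ l
  | u => sV N s Ts ψ u.path

lemma fderiv_μmodel_basisP (hs : Differentiable ℝ s) (ha : ∀ m, Differentiable ℝ (a m))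
    (m : Fin M) (n : Fin N) (u : Idx L) :
    fderiv ℝ (μmodel a s Ts m n) ψ (basisP u) =
      partialCoeff ψ u * partialArray a ψ u m * partialPulse N s Ts ψ u n := by
  rw [fderiv_μmodel_apply hs ha, Finset.sum_eq_single u.path]
  · rcases u with l | l | l | l | l <;>
      simp [basisP, gain, partialCoeff, partialArray, partialPulse, Idx.path, aV, aVφ, aVθ, sV,
        sdV, Prod.mk_zero_zero]
    ring
  · intro l _ hl
    rcases u with l' | l' | l' | l' | l' <;> simp only [Idx.path] at hl <;>
      simp [basisP, gain, hl, Prod.mk_zero_zero]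
  · simp

lemma hip_swap {k : ℕ} (x y : Fin k → ℂ) : hip y x = starRingEnd ℂ (hip x y) := by
  simp only [hip, map_sum, map_mul, Complex.conj_conj, mul_comm]

lemma hip_self {k : ℕ} (x : Fin k → ℂ) : hip x x = ((∑ i, Complex.normSq (x i) : ℝ) : ℂ) := by
  push_cast [Complex.normSq_eq_conj_mul_self]
  rfl

lemma rip_comm {k : ℕ} (x y : Fin k → ℝ) : rip x y = rip y x := by
  simp only [rip, mul_comm]

lemma sum_sum_re_conj_mul_mul (c c' : ℂ) (b b' : Fin M → ℂ) (p p' : Fin N → ℝ) :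
    ∑ n, ∑ m, (starRingEnd ℂ (c * b m * p n) * (c' * b' m * p' n)).re =
      (starRingEnd ℂ c * c' * hip b b').re * rip p p' := by
  simp only [hip, rip, Finset.mul_sum, Complex.re_sum, Finset.sum_mul]
  refine Finset.sum_congr rfl fun n _ => Finset.sum_congr rfl fun m _ => ?_
  rw [← Complex.re_mul_ofReal]
  simp only [map_mul, Complex.conj_ofReal, Complex.ofReal_mul]
  ring_nf

lemma fisher_apply (hs : Differentiable ℝ s) (ha : ∀ m, Differentiable ℝ (a m)) (u v : Idx L) :
    Fisher (N := N) a s Ts σw ψ u v = 2 / σw ^ 2 *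
      ((starRingEnd ℂ (partialCoeff ψ u) * partialCoeff ψ v *
        hip (partialArray a ψ u) (partialArray a ψ v)).re *
        rip (partialPulse N s Ts ψ u) (partialPulse N s Ts ψ v)) := by
  simp only [Fisher, Matrix.of_apply, fderiv_μmodel_basisP hs ha, sum_sum_re_conj_mul_mul]

lemma fisher_apply_self (hs : Differentiable ℝ s) (ha : ∀ m, Differentiable ℝ (a m))
    (u : Idx L) :
    Fisher (N := N) a s Ts σw ψ u u = 2 / σw ^ 2 * (Complex.normSq (partialCoeff ψ u) *
      (∑ m, Complex.normSq (partialArray a ψ u m)) *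
        rip (partialPulse N s Ts ψ u) (partialPulse N s Ts ψ u)) := by
  rw [fisher_apply hs ha, hip_self, ← Complex.normSq_eq_conj_mul_self, ← Complex.ofReal_mul,
    Complex.ofReal_re]

def PathSeparation (N : ℕ) (a : Fin M → ℝ × ℝ → ℂ) (s : ℝ → ℝ) (Ts : ℝ) (ψ : PSp L) : Prop :=
  ∀ l l' : Fin L, l ≠ l' →
    (rip (sV N s Ts ψ l) (sV N s Ts ψ l') = 0 ∧
     rip (sdV N s Ts ψ l) (sdV N s Ts ψ l') = 0 ∧
     rip (sdV N s Ts ψ l) (sV N s Ts ψ l') = 0 ∧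
     rip (sV N s Ts ψ l) (sdV N s Ts ψ l') = 0) ∨
    (hip (aV a ψ l) (aV a ψ l') = 0 ∧
     hip (aVφ a ψ l) (aVφ a ψ l') = 0 ∧
     hip (aVθ a ψ l) (aVθ a ψ l') = 0 ∧
     hip (aVφ a ψ l) (aVθ a ψ l') = 0 ∧
     hip (aVθ a ψ l) (aVφ a ψ l') = 0 ∧
     hip (aVφ a ψ l) (aV a ψ l') = 0 ∧
     hip (aVθ a ψ l) (aV a ψ l') = 0 ∧
     hip (aV a ψ l) (aVφ a ψ l') = 0 ∧
     hip (aV a ψ l) (aVθ a ψ l') = 0)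

lemma partialPulse_eq_or (u : Idx L) :
    partialPulse N s Ts ψ u = sV N s Ts ψ u.path ∨
      partialPulse N s Ts ψ u = sdV N s Ts ψ u.path := by
  rcases u with l | l | l | l | l <;> simp [partialPulse, Idx.path]

lemma partialArray_eq_or (u : Idx L) :
    partialArray a ψ u = aV a ψ u.path ∨ partialArray a ψ u = aVφ a ψ u.path ∨
      partialArray a ψ u = aVθ a ψ u.path := by
  rcases u with l | l | l | l | l <;> simp [partialArray, Idx.path]

lemma PathSeparation.rip_eq_zero_or_hip_eq_zero (h : PathSeparation N a s Ts ψ) {u v : Idx L}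
    (huv : u.path ≠ v.path) :
    rip (partialPulse N s Ts ψ u) (partialPulse N s Ts ψ v) = 0 ∨
      hip (partialArray a ψ u) (partialArray a ψ v) = 0 := by
  rcases h _ _ huv with ⟨h₁, h₂, h₃, h₄⟩ | ⟨h₁, h₂, h₃, h₄, h₅, h₆, h₇, h₈, h₉⟩
  · left
    rcases partialPulse_eq_or (N := N) (s := s) (Ts := Ts) (ψ := ψ) u with hu | hu <;>
      rcases partialPulse_eq_or (N := N) (s := s) (Ts := Ts) (ψ := ψ) v with hv | hv <;>
      rw [hu, hv] <;> assumption
  · right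
    rcases partialArray_eq_or (a := a) (ψ := ψ) u with hu | hu | hu <;>
      rcases partialArray_eq_or (a := a) (ψ := ψ) v with hv | hv | hv <;>
      rw [hu, hv] <;> assumption

lemma re_mul_rip_eq_zero_of_path_eq
    (hAs3 : ∀ l, hip (aVφ a ψ l) (aV a ψ l) = 0 ∧ hip (aVθ a ψ l) (aV a ψ l) = 0)
    (horth : ∀ l, rip (sdV N s Ts ψ l) (sV N s Ts ψ l) = 0 ∧ hip (aVφ a ψ l) (aVθ a ψ l) = 0)
    {u v : Idx L} (huv : u ≠ v) (hpath : u.path = v.path) :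
    (starRingEnd ℂ (partialCoeff ψ u) * partialCoeff ψ v *
        hip (partialArray a ψ u) (partialArray a ψ v)).re *
      rip (partialPulse N s Ts ψ u) (partialPulse N s Ts ψ v) = 0 := by
  have haφ : ∀ l, hip (aV a ψ l) (aVφ a ψ l) = 0 := fun l => by
    rw [hip_swap, (hAs3 l).1, map_zero]
  have haθ : ∀ l, hip (aV a ψ l) (aVθ a ψ l) = 0 := fun l => by
    rw [hip_swap, (hAs3 l).2, map_zero]
  have hθφ : ∀ l, hip (aVθ a ψ l) (aVφ a ψ l) = 0 := fun l => by
    rw [hip_swap, (horth l).2, map_zero]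
  have hs_sd : ∀ l, rip (sV N s Ts ψ l) (sdV N s Ts ψ l) = 0 := fun l => by
    rw [rip_comm, (horth l).1]
  rcases u with l | l | l | l | l <;> rcases v with l' | l' | l' | l' | l' <;>
    simp only [Idx.path] at hpath <;> subst hpath <;>
    simp [partialCoeff, partialArray, partialPulse, Idx.path, haφ, haθ, hθφ, hs_sd,
      hAs3, horth, hip_self] at huv ⊢

lemma fisher_isDiag (hs : Differentiable ℝ s) (ha : ∀ m, Differentiable ℝ (a m))
    (hAs2 : PathSeparation N a s Ts ψ)
    (hAs3 : ∀ l, hip (aVφ a ψ l) (aV a ψ l) = 0 ∧ hip (aVθ a ψ l) (aV a ψ l) = 0)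
    (horth : ∀ l, rip (sdV N s Ts ψ l) (sV N s Ts ψ l) = 0 ∧ hip (aVφ a ψ l) (aVθ a ψ l) = 0) :
    (Fisher (N := N) a s Ts σw ψ).IsDiag := by
  intro u v huv
  rw [fisher_apply hs ha]
  by_cases hpath : u.path = v.path
  · rw [re_mul_rip_eq_zero_of_path_eq hAs3 horth huv hpath, mul_zero]
  · rcases hAs2.rip_eq_zero_or_hip_eq_zero hpath with h | h <;> simp [h]

lemma partialCoeff_ne_zero (hα : ∀ l, gain ψ l ≠ 0) (u : Idx L) : partialCoeff ψ u ≠ 0 := by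
  rcases u with l | l | l | l | l <;> simp [partialCoeff, hα l]

lemma rip_partialPulse_self {S Sd : ℝ} (hEs : ∀ l, rip (sV N s Ts ψ l) (sV N s Ts ψ l) = S)
    (hEsd : ∀ l, rip (sdV N s Ts ψ l) (sdV N s Ts ψ l) = Sd) (u : Idx L) :
    rip (partialPulse N s Ts ψ u) (partialPulse N s Ts ψ u) =
      Sum.elim (fun _ => Sd) (fun _ => S) u := by
  rcases u with l | l | l | l | l <;> simp [partialPulse, Idx.path, hEs, hEsd]

lemma fisher_apply_self_pos (hs : Differentiable ℝ s) (ha : ∀ m, Differentiable ℝ (a m))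
    (hσ : σw ≠ 0) (hα : ∀ l, gain ψ l ≠ 0)
    (haN : ∀ l, 0 < ∑ m, Complex.normSq (aV a ψ l m))
    (haNφ : ∀ l, 0 < ∑ m, Complex.normSq (aVφ a ψ l m))
    (haNθ : ∀ l, 0 < ∑ m, Complex.normSq (aVθ a ψ l m))
    (hpulse : ∀ u, 0 < rip (partialPulse N s Ts ψ u) (partialPulse N s Ts ψ u)) (u : Idx L) :
    0 < Fisher (N := N) a s Ts σw ψ u u := by
  have harray : 0 < ∑ m, Complex.normSq (partialArray a ψ u m) := by
    rcases u with l | l | l | l | l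
    exacts [haN l, haNφ l, haNθ l, haN l, haN l]
  have hcoeff := Complex.normSq_pos.2 (partialCoeff_ne_zero hα u)
  have := hpulse u
  rw [fisher_apply_self hs ha]
  positivity

lemma Matrix.inv_diagonal_of_ne_zero {ι K : Type*} [Fintype ι] [DecidableEq ι] [Field K]
    {w : ι → K} (hw : ∀ i, w i ≠ 0) : (diagonal w)⁻¹ = diagonal w⁻¹ := by
  refine inv_eq_left_inv ?_
  rw [diagonal_mul_diagonal, ← diagonal_one]
  congr 1
  ext i
  exact inv_mul_cancel₀ (hw i)

lemma re_sum_sum_conj_mul_diagonal_mul {ι : Type*} [Fintype ι] [DecidableEq ι] (w : ι → ℝ)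
    (g : ι → ℂ) :
    (∑ u, ∑ v, starRingEnd ℂ (g u) * ((diagonal w u v : ℝ) : ℂ) * g v).re =
      ∑ u, Complex.normSq (g u) * w u := by
  simp only [diagonal_apply, Complex.re_sum]
  refine Finset.sum_congr rfl fun u _ => ?_
  simp [Complex.normSq_apply]
  ring

def gradWeight {L : ℕ} (f : ℝ) : Idx L → ℝ := Sum.elim (fun _ => (2 * π * f) ^ 2) (fun _ => 1)

lemma normSq_gVec (f : ℝ) (m : Fin M) (u : Idx L) :
    Complex.normSq (gVec a f ψ m u) =
      gradWeight f u * Complex.normSq (partialCoeff ψ u) *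
        Complex.normSq (partialArray a ψ u m) := by
  have hexp : ∀ x : ℝ, Complex.normSq (Complex.exp (-(Complex.I * x))) = 1 := fun x => by
    simp [Complex.normSq_eq_norm_sq, Complex.norm_exp]
  rcases u with l | l | l | l | l <;>
    simp only [gVec, gradWeight, partialCoeff, partialArray, Idx.path, aV, aVφ, aVθ, Sum.elim_inl,
      Sum.elim_inr, ← Complex.ofReal_ofNat, ← Complex.ofReal_mul, Complex.normSq_mul,
      Complex.normSq_neg, Complex.normSq_I, Complex.normSq_ofReal, Complex.normSq_one, hexp] <;>
    ring

lemma sum_normSq_gVec_div_fisher (hs : Differentiable ℝ s) (ha : ∀ m, Differentiable ℝ (a m))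
    (f : ℝ) {u : Idx L} (hu : Fisher (N := N) a s Ts σw ψ u u ≠ 0) :
    ∑ m, Complex.normSq (gVec a f ψ m u) / Fisher (N := N) a s Ts σw ψ u u =
      gradWeight f u * σw ^ 2 /
        (2 * rip (partialPulse N s Ts ψ u) (partialPulse N s Ts ψ u)) := by
  rw [fisher_apply_self hs ha] at hu ⊢
  have hσ : σw ≠ 0 := by rintro rfl; simp at hu
  have hcoeff_array := left_ne_zero_of_mul (right_ne_zero_of_mul hu)
  have hpulse := right_ne_zero_of_mul (right_ne_zero_of_mul hu)
  simp only [normSq_gVec, ← Finset.sum_div, ← Finset.mul_sum]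
  field_simp
  rw [mul_assoc, mul_div_assoc, div_self hcoeff_array, mul_one]

end FisherDiagonal

theorem stmt_13_general {L M N : ℕ} (a : Fin M → ℝ × ℝ → ℂ) (s : ℝ → ℝ) (Ts σw f : ℝ)
    (hs : Differentiable ℝ s) (ha : ∀ m, Differentiable ℝ (a m)) (ψ : PSp L)
    -- (As2): path separation
    (hAs2 : ∀ l l' : Fin L, l ≠ l' →
      (rip (sV N s Ts ψ l) (sV N s Ts ψ l') = 0 ∧
       rip (sdV N s Ts ψ l) (sdV N s Ts ψ l') = 0 ∧
       rip (sdV N s Ts ψ l) (sV N s Ts ψ l') = 0 ∧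
       rip (sV N s Ts ψ l) (sdV N s Ts ψ l') = 0) ∨
      (hip (aV a ψ l) (aV a ψ l') = 0 ∧
       hip (aVφ a ψ l) (aVφ a ψ l') = 0 ∧
       hip (aVθ a ψ l) (aVθ a ψ l') = 0 ∧
       hip (aVφ a ψ l) (aVθ a ψ l') = 0 ∧
       hip (aVθ a ψ l) (aVφ a ψ l') = 0 ∧
       hip (aVφ a ψ l) (aV a ψ l') = 0 ∧
       hip (aVθ a ψ l) (aV a ψ l') = 0 ∧
       hip (aV a ψ l) (aVφ a ψ l') = 0 ∧
       hip (aV a ψ l) (aVθ a ψ l') = 0))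
    -- (As3)
    (hAs3 : ∀ l, hip (aVφ a ψ l) (aV a ψ l) = 0 ∧ hip (aVθ a ψ l) (aV a ψ l) = 0)
    -- within-path orthogonality
    (horth : ∀ l, rip (sdV N s Ts ψ l) (sV N s Ts ψ l) = 0 ∧ hip (aVφ a ψ l) (aVθ a ψ l) = 0)
    -- nondegeneracy of the paths
    (hα : ∀ l, gain ψ l ≠ 0)
    (haN : ∀ l, 0 < ∑ m, Complex.normSq (aV a ψ l m))
    (haNφ : ∀ l, 0 < ∑ m, Complex.normSq (aVφ a ψ l m))
    (haNθ : ∀ l, 0 < ∑ m, Complex.normSq (aVθ a ψ l m))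
    -- energy conditions ‖s_l‖² = ‖s‖² > 0 and ‖ṡ_l‖² = ‖ṡ‖² > 0
    (Snorm2 Sdnorm2 : ℝ)
    (hEs : ∀ l, rip (sV N s Ts ψ l) (sV N s Ts ψ l) = Snorm2)
    (hEsd : ∀ l, rip (sdV N s Ts ψ l) (sdV N s Ts ψ l) = Sdnorm2)
    (hSpos : 0 < Snorm2) (hSdpos : 0 < Sdnorm2)
    (hσ : σw ≠ 0)
    -- SNR and mean squared bandwidth σ_F²
    (SNR σF2 : ℝ) (hSNR : SNR = Snorm2 / σw ^ 2) (hσF2 : σF2 = Sdnorm2 / ((2 * π) ^ 2 * Snorm2)) :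
    IsUnit (Fisher (N := N) a s Ts σw ψ).det ∧
    (1 / (M : ℝ)) * ∑ m : Fin M,
        (∑ u : Idx L, ∑ v : Idx L,
          (starRingEnd ℂ) (gVec a f ψ m u) *
            (((Fisher (N := N) a s Ts σw ψ)⁻¹ u v : ℝ) : ℂ) * gVec a f ψ m v).re =
      (1 / SNR) * ((L : ℝ) / (M : ℝ)) * (2 + (1 / 2) * (f ^ 2 / σF2)) := by
  have hpulse := rip_partialPulse_self hEs hEsd
  have hpos : ∀ u, 0 < Fisher (N := N) a s Ts σw ψ u u :=
    fisher_apply_self_pos hs ha hσ hα haN haNφ haNθ fun u => by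
      rw [hpulse]; rcases u with _ | _ <;> assumption
  have hF : Fisher (N := N) a s Ts σw ψ = diagonal fun u => Fisher (N := N) a s Ts σw ψ u u :=
    (fisher_isDiag hs ha hAs2 hAs3 horth).diagonal_diag.symm
  refine ⟨?_, ?_⟩
  · rw [hF, det_diagonal]
    exact (Finset.prod_pos fun u _ => hpos u).ne'.isUnit
  rw [hF, Matrix.inv_diagonal_of_ne_zero fun u => (hpos u).ne']
  simp only [re_sum_sum_conj_mul_diagonal_mul, Pi.inv_apply, ← div_eq_mul_inv]
  rw [Finset.sum_comm]
  simp only [sum_normSq_gVec_div_fisher hs ha f (hpos _).ne', hpulse, Fintype.sum_sum_type,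
    gradWeight, Sum.elim_inl, Sum.elim_inr, Finset.sum_const, Finset.card_univ, Fintype.card_fin,
    Fintype.card_sum, nsmul_eq_mul, hSNR, hσF2]
  field_simp
  push_cast
  ring

/-- Corollary 1: under (As2), (As3), within-path orthogonality and
the energy conditions, the Fisher matrix is invertible and the lower bound of
Theorem 1 averaged over the receive antennas equals
`(1/SNR)·(L/M)·(2 + (1/2)(f/σ_F)²)`; in particular it does not depend on `ψ`. -/
theorem stmt_13 {L M N : ℕ} (a : Fin M → ℝ × ℝ → ℂ) (s : ℝ → ℝ) (Ts σw f : ℝ)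
    (hs : Differentiable ℝ s) (ha : ∀ m, Differentiable ℝ (a m)) (ψ : PSp L)
    -- (As2): path separation
    (hAs2 : ∀ l l' : Fin L, l ≠ l' →
      (rip (sV N s Ts ψ l) (sV N s Ts ψ l') = 0 ∧
       rip (sdV N s Ts ψ l) (sdV N s Ts ψ l') = 0 ∧
       rip (sdV N s Ts ψ l) (sV N s Ts ψ l') = 0 ∧
       rip (sV N s Ts ψ l) (sdV N s Ts ψ l') = 0) ∨
      (hip (aV a ψ l) (aV a ψ l') = 0 ∧
       hip (aVφ a ψ l) (aVφ a ψ l') = 0 ∧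
       hip (aVθ a ψ l) (aVθ a ψ l') = 0 ∧
       hip (aVφ a ψ l) (aVθ a ψ l') = 0 ∧
       hip (aVθ a ψ l) (aVφ a ψ l') = 0 ∧
       hip (aVφ a ψ l) (aV a ψ l') = 0 ∧
       hip (aVθ a ψ l) (aV a ψ l') = 0 ∧
       hip (aV a ψ l) (aVφ a ψ l') = 0 ∧
       hip (aV a ψ l) (aVθ a ψ l') = 0))
    -- (As3)
    (hAs3 : ∀ l, hip (aVφ a ψ l) (aV a ψ l) = 0 ∧ hip (aVθ a ψ l) (aV a ψ l) = 0)
    -- within-path orthogonality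
    (horth : ∀ l, rip (sdV N s Ts ψ l) (sV N s Ts ψ l) = 0 ∧ hip (aVφ a ψ l) (aVθ a ψ l) = 0)
    -- nondegeneracy of the paths
    (hα : ∀ l, gain ψ l ≠ 0)
    (haN : ∀ l, 0 < ∑ m, Complex.normSq (aV a ψ l m))
    (haNφ : ∀ l, 0 < ∑ m, Complex.normSq (aVφ a ψ l m))
    (haNθ : ∀ l, 0 < ∑ m, Complex.normSq (aVθ a ψ l m))
    -- energy conditions ‖s_l‖² = ‖s‖² > 0 and ‖ṡ_l‖² = ‖ṡ‖² > 0
    (Snorm2 Sdnorm2 : ℝ)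
    (hSn : Snorm2 = ∑ n : Fin N, s ((n : ℕ) * Ts) ^ 2)
    (hSdn : Sdnorm2 = ∑ n : Fin N, deriv s ((n : ℕ) * Ts) ^ 2)
    (hEs : ∀ l, rip (sV N s Ts ψ l) (sV N s Ts ψ l) = Snorm2)
    (hEsd : ∀ l, rip (sdV N s Ts ψ l) (sdV N s Ts ψ l) = Sdnorm2)
    (hSpos : 0 < Snorm2) (hSdpos : 0 < Sdnorm2)
    (hσ : σw ≠ 0) (hM : 0 < M)
    -- SNR and mean squared bandwidth σ_F²
    (SNR σF2 : ℝ) (hSNR : SNR = Snorm2 / σw ^ 2) (hσF2 : σF2 = Sdnorm2 / ((2 * π) ^ 2 * Snorm2)) :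
    IsUnit (Fisher (N := N) a s Ts σw ψ).det ∧
    (1 / (M : ℝ)) * ∑ m : Fin M,
        (∑ u : Idx L, ∑ v : Idx L,
          (starRingEnd ℂ) (gVec a f ψ m u) *
            (((Fisher (N := N) a s Ts σw ψ)⁻¹ u v : ℝ) : ℂ) * gVec a f ψ m v).re =
      (1 / SNR) * ((L : ℝ) / (M : ℝ)) * (2 + (1 / 2) * (f ^ 2 / σF2)) :=
  stmt_13_general a s Ts σw f hs ha ψ hAs2 hAs3 horth hα haN haNφ haNθ Snorm2 Sdnorm2 hEs hEsd hSpos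
    hSdpos hσ SNR σF2 hSNR hσF2

end
end
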